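/- arXiv:1306.5616 — 2 statements merged into one kernel-verified Lean document; each statement's English description precedes it below -/
import Mathlib

section
/- Let ν ∈ (0,1), c_ν := ν² - 1/4, γ > 0 and n a positive integer. Let f = f_r + f_s and g = g_r + g_s belong to D(A), i.e. f_r, g_r are of class H² on [-1,1] with f_r(0)=f_r'(0)=g_r(0)=g_r'(0)=0, f_s and g_s are of the singular form with coefficient quadruples satisfying the transmission conditions, and f(±1) = g(±1) = 0. Set A_n h := -h_r'' + (c_ν/x²) h_r + (nπ)² |x|^(2γ) h for h ∈ D(A). Then ∫₋₁¹ (A_n f)(x) g(x) dx = ∫₋₁¹ f(x) (A_n g)(x) dx. -/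
open MeasureTheory Real

/-!
The potential term is symmetric, and `x ^ (1/2 ± ν)` solve `-y'' + (ν² - 1/4) / x² y = 0`, so on
each half-interval the difference of the two integrands is `f g'' - f'' g` with `f = f_r + f_s`.
On `[ε, 1]` this integrates to minus the Wronskian `f g' - f' g` at `ε`, the Wronskian at `1`
vanishing by the Dirichlet condition. Since `f_r'' ∈ L²` and `f_r(0) = f_r'(0) = 0`, we have
`f_r' = O(x^{1/2})` and `f_r = O(x^{3/2})`, so as `ε → 0⁺` only the Wronskian of the singular parts
survives, and it is the constant `-2ν (a₁ d₂ - a₂ d₁)`. After the reflection `x ↦ -x` the left half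
contributes `2ν (b₁ e₂ - b₂ e₁)`, and the transmission conditions say exactly that the two
contributions cancel.
-/

open Set Filter Topology Asymptotics

theorem AbsolutelyContinuousOnInterval.congr {f g : ℝ → ℝ} {a b : ℝ}
    (hf : AbsolutelyContinuousOnInterval f a b) (h : EqOn f g (uIcc a b)) :
    AbsolutelyContinuousOnInterval g a b := by
  refine Tendsto.congr' (eventually_inf_principal.2 (Eventually.of_forall fun E hE => ?_)) hf
  exact Finset.sum_congr rfl fun i hi => by rw [h (hE.1 i hi).1, h (hE.1 i hi).2]

structure IsPrimitiveOn (u u' : ℝ → ℝ) (a b : ℝ) : Prop where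
  intervalIntegrable : IntervalIntegrable u' volume a b
  eq_add_integral : ∀ x ∈ Icc a b, u x = u a + ∫ t in a..x, u' t

namespace IsPrimitiveOn

variable {u u' v v' : ℝ → ℝ} {a b c d : ℝ}

theorem continuousOn (h : IsPrimitiveOn u u' a b) : ContinuousOn u (Icc a b) :=
  ((continuousOn_const.add (intervalIntegral.continuousOn_primitive_interval' h.intervalIntegrable
    left_mem_uIcc)).mono Icc_subset_uIcc).congr h.eq_add_integral

theorem absolutelyContinuousOnInterval (h : IsPrimitiveOn u u' a b) (hab : a ≤ b) :
    AbsolutelyContinuousOnInterval u a b := by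
  have hconst : AbsolutelyContinuousOnInterval (fun _ => u a) a b :=
    (LipschitzWith.const (u a)).lipschitzOnWith.absolutelyContinuousOnInterval
  have hprim : AbsolutelyContinuousOnInterval (fun x => ∫ t in a..x, u' t) a b :=
    h.intervalIntegrable.absolutelyContinuousOnInterval_intervalIntegral left_mem_uIcc
  refine (hconst.add hprim).congr ?_
  rw [uIcc_of_le hab]
  exact fun x hx => (h.eq_add_integral x hx).symm

theorem ae_hasDerivAt (h : IsPrimitiveOn u u' a b) :
    ∀ᵐ x, x ∈ Ioo a b → HasDerivAt u (u' x) x := by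
  filter_upwards [h.intervalIntegrable.ae_hasDerivAt_integral] with x hx hxab
  have hmem : x ∈ uIcc a b := Ioo_subset_Icc_self.trans Icc_subset_uIcc hxab
  refine ((hx hmem a left_mem_uIcc).const_add (u a)).congr_of_eventuallyEq ?_
  filter_upwards [Ioo_mem_nhds hxab.1 hxab.2] with y hy
  exact h.eq_add_integral y (Ioo_subset_Icc_self hy)

theorem mono (h : IsPrimitiveOn u u' a b) (hac : a ≤ c) (hcd : c ≤ d) (hdb : d ≤ b) :
    IsPrimitiveOn u u' c d := by
  have hint : ∀ x ∈ Icc a b, IntervalIntegrable u' volume a x := fun x hx =>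
    h.intervalIntegrable.mono_set (uIcc_subset_uIcc left_mem_uIcc (Icc_subset_uIcc hx))
  refine ⟨h.intervalIntegrable.mono_set (uIcc_subset_uIcc (Icc_subset_uIcc ⟨hac, hcd.trans hdb⟩)
    (Icc_subset_uIcc ⟨hac.trans hcd, hdb⟩)), fun x hx => ?_⟩
  have hxab : x ∈ Icc a b := ⟨hac.trans hx.1, hx.2.trans hdb⟩
  have hcab : c ∈ Icc a b := ⟨hac, hcd.trans hdb⟩
  rw [h.eq_add_integral x hxab, h.eq_add_integral c hcab, add_assoc,
    intervalIntegral.integral_add_adjacent_intervals (hint c hcab)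
      ((hint c hcab).symm.trans (hint x hxab))]

theorem add (hu : IsPrimitiveOn u u' a b) (hv : IsPrimitiveOn v v' a b) :
    IsPrimitiveOn (fun x => u x + v x) (fun x => u' x + v' x) a b := by
  refine ⟨hu.intervalIntegrable.add hv.intervalIntegrable, fun x hx => ?_⟩
  have hsub : uIcc a x ⊆ uIcc a b := uIcc_subset_uIcc left_mem_uIcc (Icc_subset_uIcc hx)
  rw [intervalIntegral.integral_add (hu.intervalIntegrable.mono_set hsub)
      (hv.intervalIntegrable.mono_set hsub),
    hu.eq_add_integral x hx, hv.eq_add_integral x hx]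
  ring

theorem neg (h : IsPrimitiveOn u u' a b) :
    IsPrimitiveOn (fun x => -u x) (fun x => -u' x) a b :=
  ⟨h.intervalIntegrable.neg, fun x hx => by
    rw [intervalIntegral.integral_neg, h.eq_add_integral x hx]; ring⟩

theorem comp_neg (h : IsPrimitiveOn u u' (-b) (-a)) :
    IsPrimitiveOn (fun x => u (-x)) (fun x => -u' (-x)) a b := by
  have hint : IntervalIntegrable (fun x => u' (-x)) volume a b := by
    simpa using ((IntervalIntegrable.iff_comp_neg (f := u')).mp h.intervalIntegrable).symm
  refine ⟨hint.neg, fun x hx => ?_⟩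
  have hx' : -x ∈ Icc (-b) (-a) := ⟨neg_le_neg hx.2, neg_le_neg hx.1⟩
  have hsplit := intervalIntegral.integral_add_adjacent_intervals
    (h.intervalIntegrable.mono_set (uIcc_subset_uIcc left_mem_uIcc (Icc_subset_uIcc hx')))
    (h.intervalIntegrable.mono_set (uIcc_subset_uIcc (Icc_subset_uIcc hx') right_mem_uIcc))
  simp only [intervalIntegral.integral_neg, intervalIntegral.integral_comp_neg]
  rw [h.eq_add_integral _ hx', h.eq_add_integral _ ⟨neg_le_neg (hx.1.trans hx.2), le_rfl⟩,
    ← hsplit]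
  ring

end IsPrimitiveOn

theorem isPrimitiveOn_of_hasDerivAt {u u' : ℝ → ℝ} {a b : ℝ} (hab : a ≤ b)
    (hd : ∀ x ∈ Icc a b, HasDerivAt u (u' x) x) (hc : ContinuousOn u' (Icc a b)) :
    IsPrimitiveOn u u' a b := by
  refine ⟨hc.intervalIntegrable_of_Icc hab, fun x hx => ?_⟩
  have hsub : Icc a x ⊆ Icc a b := Icc_subset_Icc_right hx.2
  rw [intervalIntegral.integral_eq_sub_of_hasDerivAt
    (fun y hy => hd y (hsub (by rwa [uIcc_of_le hx.1] at hy)))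
    ((hc.mono hsub).intervalIntegrable_of_Icc hx.1)]
  ring

def wronskian (u u' v v' : ℝ → ℝ) (x : ℝ) : ℝ := u x * v' x - u' x * v x

theorem integral_mul_sub_eq_wronskian {u u' u'' v v' v'' : ℝ → ℝ} {a b : ℝ} (hab : a ≤ b)
    (hu : IsPrimitiveOn u u' a b) (hu' : IsPrimitiveOn u' u'' a b)
    (hv : IsPrimitiveOn v v' a b) (hv' : IsPrimitiveOn v' v'' a b) :
    ∫ x in a..b, (u x * v'' x - u'' x * v x) = wronskian u u' v v' b - wronskian u u' v v' a := by
  have hW : AbsolutelyContinuousOnInterval (wronskian u u' v v') a b :=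
    ((hu.absolutelyContinuousOnInterval hab).fun_mul
      (hv'.absolutelyContinuousOnInterval hab)).fun_sub
      ((hu'.absolutelyContinuousOnInterval hab).fun_mul (hv.absolutelyContinuousOnInterval hab))
  rw [← hW.integral_deriv_eq_sub]
  refine intervalIntegral.integral_congr_ae ?_
  filter_upwards [hu.ae_hasDerivAt, hu'.ae_hasDerivAt, hv.ae_hasDerivAt, hv'.ae_hasDerivAt,
    Measure.ae_ne volume b] with x hdu hdu' hdv hdv' hxb hx
  rw [uIoc_of_le hab] at hx
  have hx' : x ∈ Ioo a b := ⟨hx.1, lt_of_le_of_ne hx.2 hxb⟩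
  have hd : HasDerivAt (wronskian u u' v v')
      (u' x * v' x + u x * v'' x - (u'' x * v x + u' x * v' x)) x :=
    ((hdu hx').mul (hdv' hx')).sub ((hdu' hx').mul (hdv hx'))
  rw [hd.deriv]
  ring

theorem isBigO_rpow_of_le {p q : ℝ} (h : q ≤ p) :
    (fun x : ℝ => x ^ p) =O[𝓟 (Ioc 0 1)] fun x => x ^ q := by
  refine isBigO_principal.2 ⟨1, fun x hx => ?_⟩
  rw [one_mul, norm_of_nonneg (rpow_nonneg hx.1.le _), norm_of_nonneg (rpow_nonneg hx.1.le _)]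
  exact rpow_le_rpow_of_exponent_ge hx.1 hx.2 h

theorem isBigO_const_div_sq (c : ℝ) :
    (fun x : ℝ => c / x ^ 2) =O[𝓟 (Ioc 0 1)] fun x => x ^ (-2 : ℝ) := by
  refine isBigO_principal.2 ⟨|c|, fun x hx => ?_⟩
  rw [rpow_neg hx.1.le, rpow_two, norm_div, norm_of_nonneg (inv_nonneg.2 (sq_nonneg x)),
    norm_of_nonneg (sq_nonneg x), div_eq_mul_inv, norm_eq_abs]

namespace Asymptotics.IsBigO

variable {f g : ℝ → ℝ} {p q : ℝ}

theorem exists_bound_rpow (hf : f =O[𝓟 (Ioc 0 1)] fun x => x ^ p) :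
    ∃ C, 0 ≤ C ∧ ∀ x ∈ Ioc (0:ℝ) 1, |f x| ≤ C * x ^ p := by
  obtain ⟨C, hC0, hC⟩ := hf.exists_nonneg
  refine ⟨C, hC0, fun x hx => ?_⟩
  simpa [norm_of_nonneg (rpow_nonneg hx.1.le p)] using isBigOWith_principal.1 hC x hx

theorem mul_rpow (hf : f =O[𝓟 (Ioc 0 1)] fun x => x ^ p)
    (hg : g =O[𝓟 (Ioc 0 1)] fun x => x ^ q) :
    (fun x => f x * g x) =O[𝓟 (Ioc 0 1)] fun x => x ^ (p + q) :=
  (hf.mul hg).congr' EventuallyEq.rfl (EqOn.eventuallyEq fun _ hx => (rpow_add hx.1 p q).symm)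

theorem integrableOn_Ioc (hf : f =O[𝓟 (Ioc 0 1)] fun x => x ^ p) (hp : -1 < p)
    (hm : AEStronglyMeasurable f (volume.restrict (Ioc 0 1))) : IntegrableOn f (Ioc 0 1) := by
  obtain ⟨C, -, hC⟩ := hf.exists_bound_rpow
  refine (((intervalIntegral.intervalIntegrable_rpow' hp).const_mul C).1).mono' hm
    ((ae_restrict_iff' measurableSet_Ioc).2 (Eventually.of_forall hC))

theorem memLp_two (hf : f =O[𝓟 (Ioc 0 1)] fun x => x ^ p) (hp : -1/2 < p)
    (hm : AEStronglyMeasurable f (volume.restrict (Ioc 0 1))) :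
    MemLp f 2 (volume.restrict (Ioc 0 1)) := by
  refine (memLp_two_iff_integrable_sq hm).2 ?_
  simpa only [sq, IntegrableOn] using (hf.mul_rpow hf).integrableOn_Ioc (by linarith) (hm.mul hm)

theorem tendsto_nhdsGT_zero (hf : f =O[𝓟 (Ioc 0 1)] fun x => x ^ p) (hp : 0 < p) :
    Tendsto f (𝓝[>] 0) (𝓝 0) := by
  refine (hf.mono (le_principal_iff.2 (Ioc_mem_nhdsGT zero_lt_one))).trans_tendsto ?_
  have h := (continuousAt_rpow_const 0 p (Or.inr hp.le)).tendsto.mono_left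
    (nhdsWithin_le_nhds (s := Ioi 0))
  rwa [zero_rpow hp.ne'] at h

end Asymptotics.IsBigO

namespace IsPrimitiveOn

variable {v v' : ℝ → ℝ} {p : ℝ}

theorem isBigO_rpow_add_one (h : IsPrimitiveOn v v' 0 1) (h0 : v 0 = 0) (hp : 0 ≤ p)
    (h' : v' =O[𝓟 (Ioc 0 1)] fun x => x ^ p) :
    v =O[𝓟 (Ioc 0 1)] fun x => x ^ (p + 1) := by
  obtain ⟨C, hC0, hC⟩ := h'.exists_bound_rpow
  refine isBigO_principal.2 ⟨C, fun x hx => ?_⟩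
  have hvx : v x = ∫ t in (0:ℝ)..x, v' t := by
    simpa [h0] using h.eq_add_integral x ⟨hx.1.le, hx.2⟩
  have hbound : ∀ t ∈ uIoc 0 x, ‖v' t‖ ≤ C * x ^ p := by
    intro t ht
    rw [uIoc_of_le hx.1.le] at ht
    exact (hC t ⟨ht.1, ht.2.trans hx.2⟩).trans
      (mul_le_mul_of_nonneg_left (rpow_le_rpow ht.1.le ht.2 hp) hC0)
  rw [hvx, norm_of_nonneg (rpow_nonneg hx.1.le _), rpow_add_one hx.1.ne']
  simpa [abs_of_pos hx.1, mul_assoc] using intervalIntegral.norm_integral_le_of_norm_le_const hbound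

theorem isBigO_rpow_half (h : IsPrimitiveOn v v' 0 1) (h0 : v 0 = 0)
    (hsq : IntervalIntegrable (fun x => v' x ^ 2) volume 0 1) :
    v =O[𝓟 (Ioc 0 1)] fun x => x ^ (1/2 : ℝ) := by
  set S := ∫ t in (0:ℝ)..1, v' t ^ 2
  refine isBigO_principal.2 ⟨(S + 1) / 2, fun x hx => ?_⟩
  set l := x ^ (1/2 : ℝ)
  have hl : 0 < l := rpow_pos_of_pos hx.1 _
  have hll : x * l⁻¹ = l := by
    rw [eq_comm, eq_mul_inv_iff_mul_eq₀ hl.ne', ← rpow_add hx.1]; norm_num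
  have hsub : uIcc 0 x ⊆ uIcc 0 1 :=
    uIcc_subset_uIcc left_mem_uIcc (Icc_subset_uIcc ⟨hx.1.le, hx.2⟩)
  have hsqx := hsq.mono_set hsub
  have hvx : v x = ∫ t in (0:ℝ)..x, v' t := by
    simpa [h0] using h.eq_add_integral x ⟨hx.1.le, hx.2⟩
  -- AM-GM with weight `l = √x` replaces Cauchy-Schwarz
  have amgm : ∀ y : ℝ, |y| ≤ (l * y ^ 2 + l⁻¹) / 2 := fun y => by
    have key : l⁻¹ * (l * |y| - 1) ^ 2 = l * y ^ 2 - 2 * |y| + l⁻¹ := by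
      rw [← sq_abs y]; field_simp; ring
    nlinarith [mul_nonneg (inv_nonneg.2 hl.le) (sq_nonneg (l * |y| - 1))]
  have hSx : ∫ t in (0:ℝ)..x, v' t ^ 2 ≤ S :=
    intervalIntegral.integral_mono_interval le_rfl hx.1.le hx.2
      (Eventually.of_forall fun t => sq_nonneg _) hsq
  rw [norm_of_nonneg hl.le, hvx, norm_eq_abs]
  calc |∫ t in (0:ℝ)..x, v' t| ≤ ∫ t in (0:ℝ)..x, |v' t| :=
        intervalIntegral.abs_integral_le_integral_abs hx.1.le
    _ ≤ ∫ t in (0:ℝ)..x, (l * v' t ^ 2 + l⁻¹) / 2 :=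
        intervalIntegral.integral_mono_on hx.1.le
          (h.intervalIntegrable.mono_set hsub).abs
          (((hsqx.const_mul l).add intervalIntegrable_const).div_const 2) fun t _ => amgm _
    _ = (l * (∫ t in (0:ℝ)..x, v' t ^ 2) + x * l⁻¹) / 2 := by
        rw [intervalIntegral.integral_div, intervalIntegral.integral_add (hsqx.const_mul l)
          intervalIntegrable_const, intervalIntegral.integral_const_mul,
          intervalIntegral.integral_const, sub_zero, smul_eq_mul]
    _ ≤ (S + 1) / 2 * l := by
        rw [hll]; nlinarith

end IsPrimitiveOn

structure IsH2On (u u' u'' : ℝ → ℝ) (a b : ℝ) : Prop where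
  primitive : IsPrimitiveOn u u' a b
  primitive_deriv : IsPrimitiveOn u' u'' a b
  sq_intervalIntegrable : IntervalIntegrable (fun x => u'' x ^ 2) volume a b

namespace IsH2On

variable {u u' u'' : ℝ → ℝ} {a b c d : ℝ}

theorem of_eq_add_integral (hab : a ≤ b) (hu'' : IntervalIntegrable u'' volume a b)
    (hsq : IntervalIntegrable (fun x => u'' x ^ 2) volume a b)
    (hu : ∀ x ∈ Icc a b, u x = u a + ∫ t in a..x, u' t)
    (hu' : ∀ x ∈ Icc a b, u' x = u' a + ∫ t in a..x, u'' t) : IsH2On u u' u'' a b :=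
  have hp' : IsPrimitiveOn u' u'' a b := ⟨hu'', hu'⟩
  ⟨⟨hp'.continuousOn.intervalIntegrable_of_Icc hab, hu⟩, hp', hsq⟩

theorem mono (h : IsH2On u u' u'' a b) (hac : a ≤ c) (hcd : c ≤ d) (hdb : d ≤ b) :
    IsH2On u u' u'' c d :=
  ⟨h.primitive.mono hac hcd hdb, h.primitive_deriv.mono hac hcd hdb,
    h.sq_intervalIntegrable.mono_set (uIcc_subset_uIcc (Icc_subset_uIcc ⟨hac, hcd.trans hdb⟩)
      (Icc_subset_uIcc ⟨hac.trans hcd, hdb⟩))⟩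

theorem comp_neg (h : IsH2On u u' u'' (-b) (-a)) :
    IsH2On (fun x => u (-x)) (fun x => -u' (-x)) (fun x => u'' (-x)) a b :=
  ⟨h.primitive.comp_neg, by simpa using h.primitive_deriv.comp_neg.neg,
    by simpa using ((IntervalIntegrable.iff_comp_neg (f := fun x => u'' x ^ 2)).mp
      h.sq_intervalIntegrable).symm⟩

end IsH2On

/-- The singular part `h_s` on `(0, 1]`; it solves `-y'' + (ν² - 1/4) / x² y = 0` there. -/
noncomputable def singularPart (ν c₁ c₂ x : ℝ) : ℝ := c₁ * x ^ (ν + 1/2) + c₂ * x ^ (-ν + 1/2)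

noncomputable def singularPartDeriv (ν c₁ c₂ x : ℝ) : ℝ :=
  c₁ * (ν + 1/2) * x ^ (ν + 1/2 - 1) + c₂ * (-ν + 1/2) * x ^ (-ν + 1/2 - 1)

section singularPart

variable {ν c₁ c₂ d₁ d₂ x : ℝ}

theorem hasDerivAt_singularPart (hx : 0 < x) :
    HasDerivAt (singularPart ν c₁ c₂) (singularPartDeriv ν c₁ c₂ x) x := by
  refine HasDerivAt.congr_deriv
    (((hasDerivAt_rpow_const (Or.inl hx.ne')).const_mul c₁).fun_add
      ((hasDerivAt_rpow_const (Or.inl hx.ne')).const_mul c₂)) ?_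
  simp only [singularPartDeriv]; ring

theorem hasDerivAt_singularPartDeriv (hx : 0 < x) :
    HasDerivAt (singularPartDeriv ν c₁ c₂) ((ν ^ 2 - 1/4) / x ^ 2 * singularPart ν c₁ c₂ x) x := by
  refine HasDerivAt.congr_deriv
    (((hasDerivAt_rpow_const (Or.inl hx.ne')).const_mul _).fun_add
      ((hasDerivAt_rpow_const (Or.inl hx.ne')).const_mul _)) ?_
  have hpow : ∀ p : ℝ, x ^ (p - 1 - 1) = x ^ p / x ^ 2 := fun p => by
    rw [sub_sub, one_add_one_eq_two, rpow_sub hx, rpow_two]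
  simp only [singularPart, hpow]
  field_simp
  ring

theorem wronskian_singularPart (hx : 0 < x) :
    wronskian (singularPart ν c₁ c₂) (singularPartDeriv ν c₁ c₂)
      (singularPart ν d₁ d₂) (singularPartDeriv ν d₁ d₂) x = -(2 * ν) * (c₁ * d₂ - c₂ * d₁) := by
  have h₁ : x ^ (ν + 1/2) * x ^ (-ν + 1/2 - 1) = 1 := by
    rw [← rpow_add hx]; ring_nf; exact rpow_zero x
  have h₂ : x ^ (ν + 1/2 - 1) * x ^ (-ν + 1/2) = 1 := by
    rw [← rpow_add hx]; ring_nf; exact rpow_zero x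
  simp only [wronskian, singularPart, singularPartDeriv]
  linear_combination (c₁ * d₂ - c₂ * d₁) * (-ν + 1/2) * h₁ - (c₁ * d₂ - c₂ * d₁) * (ν + 1/2) * h₂

theorem isBigO_singularPart (hν : 0 ≤ ν) :
    singularPart ν c₁ c₂ =O[𝓟 (Ioc 0 1)] fun x => x ^ (-ν + 1/2) :=
  ((isBigO_rpow_of_le (by linarith)).const_mul_left c₁).add
    ((isBigO_refl _ _).const_mul_left c₂)

theorem isBigO_singularPartDeriv (hν : 0 ≤ ν) :
    singularPartDeriv ν c₁ c₂ =O[𝓟 (Ioc 0 1)] fun x => x ^ (-ν + 1/2 - 1) :=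
  ((isBigO_rpow_of_le (by linarith)).const_mul_left _).add
    ((isBigO_refl _ _).const_mul_left _)

end singularPart

theorem isPrimitiveOn_singularPart {ν c₁ c₂ a b : ℝ} (ha : 0 < a) (hab : a ≤ b) :
    IsPrimitiveOn (singularPart ν c₁ c₂) (singularPartDeriv ν c₁ c₂) a b :=
  isPrimitiveOn_of_hasDerivAt hab (fun _ hx => hasDerivAt_singularPart (ha.trans_le hx.1))
    fun _ hx => (hasDerivAt_singularPartDeriv (ha.trans_le hx.1)).continuousAt.continuousWithinAt

theorem isPrimitiveOn_singularPartDeriv {ν c₁ c₂ a b : ℝ} (ha : 0 < a) (hab : a ≤ b) :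
    IsPrimitiveOn (singularPartDeriv ν c₁ c₂)
      (fun x => (ν ^ 2 - 1/4) / x ^ 2 * singularPart ν c₁ c₂ x) a b := by
  refine isPrimitiveOn_of_hasDerivAt hab
    (fun _ hx => hasDerivAt_singularPartDeriv (ha.trans_le hx.1)) fun x hx => ?_
  have hx0 : 0 < x := ha.trans_le hx.1
  exact ((continuousAt_const.div (continuous_pow 2).continuousAt (pow_ne_zero 2 hx0.ne')).mul
    (hasDerivAt_singularPart hx0).continuousAt).continuousWithinAt

theorem intervalIntegral_eq_of_tendsto_nhdsGT {D φ : ℝ → ℝ} {a b l : ℝ} (hab : a < b)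
    (hD : IntervalIntegrable D volume a b) (h : ∀ ε ∈ Ioc a b, ∫ x in ε..b, D x = φ ε)
    (hφ : Tendsto φ (𝓝[>] a) (𝓝 l)) : ∫ x in a..b, D x = l := by
  have hc := intervalIntegral.continuousOn_primitive_interval_left (μ := volume)
    ((intervalIntegrable_iff_integrableOn_Icc_of_le hab.le).1 hD |>.mono_set
      (uIcc_of_le hab.le).subset)
  have hle : 𝓝[>] a ≤ 𝓝[uIcc a b] a :=
    nhdsWithin_le_of_mem (by rw [uIcc_of_le hab.le]; exact Icc_mem_nhdsGT hab)
  refine tendsto_nhds_unique ((hc a left_mem_uIcc).tendsto.mono_left hle) (hφ.congr' ?_)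
  filter_upwards [Ioc_mem_nhdsGT hab] with ε hε using (h ε hε).symm

theorem intervalIntegral_neg_eq_add_comp_neg {φ : ℝ → ℝ} {a : ℝ}
    (h : IntervalIntegrable φ volume 0 a) (h' : IntervalIntegrable (fun x => φ (-x)) volume 0 a) :
    ∫ x in (-a)..a, φ x = (∫ x in (0:ℝ)..a, φ x) + ∫ x in (0:ℝ)..a, φ (-x) := by
  have hneg : IntervalIntegrable φ volume (-a) 0 := by
    simpa using ((IntervalIntegrable.iff_comp_neg (f := fun x => φ (-x))).mp h').symm
  rw [← intervalIntegral.integral_add_adjacent_intervals hneg h, intervalIntegral.integral_comp_neg,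
    neg_zero, add_comm]

noncomputable def besselOp (ν : ℝ) (u u'' : ℝ → ℝ) (x : ℝ) : ℝ :=
  -(u'' x) + ((ν ^ 2 - 1/4) / x ^ 2) * u x

@[simp]
theorem besselOp_comp_neg (ν : ℝ) (u u'' : ℝ → ℝ) (x : ℝ) :
    besselOp ν (fun x => u (-x)) (fun x => u'' (-x)) x = besselOp ν u u'' (-x) := by
  simp [besselOp]

/-- `u + F` is the restriction to `(0, 1]` of an element of `D(A)` with regular part `u`; the left
half `[-1, 0)` is brought to this form by `x ↦ -x`. -/
structure IsDomainHalf (ν : ℝ) (u u' u'' F : ℝ → ℝ) (c₁ c₂ : ℝ) : Prop where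
  isH2On : IsH2On u u' u'' 0 1
  apply_zero : u 0 = 0
  deriv_zero : u' 0 = 0
  eqOn_singularPart : EqOn F (singularPart ν c₁ c₂) (Ioc 0 1)
  apply_one : u 1 + F 1 = 0

namespace IsDomainHalf

variable {ν ε : ℝ} {u u' u'' F w w' w'' G q : ℝ → ℝ} {a₁ a₂ d₁ d₂ : ℝ}

theorem isBigO_deriv (hf : IsDomainHalf ν u u' u'' F a₁ a₂) :
    u' =O[𝓟 (Ioc 0 1)] fun x => x ^ (1/2 : ℝ) :=
  hf.isH2On.primitive_deriv.isBigO_rpow_half hf.deriv_zero hf.isH2On.sq_intervalIntegrable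

theorem isBigO_regular (hf : IsDomainHalf ν u u' u'' F a₁ a₂) :
    u =O[𝓟 (Ioc 0 1)] fun x => x ^ (1/2 + 1 : ℝ) :=
  hf.isH2On.primitive.isBigO_rpow_add_one hf.apply_zero (by norm_num) hf.isBigO_deriv

theorem isBigO_add_singularPart (hf : IsDomainHalf ν u u' u'' F a₁ a₂) (hν : 0 ≤ ν) :
    (fun x => u x + singularPart ν a₁ a₂ x) =O[𝓟 (Ioc 0 1)] fun x => x ^ (-ν + 1/2) :=
  (hf.isBigO_regular.trans (isBigO_rpow_of_le (by linarith))).add (isBigO_singularPart hν)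

theorem isBigO_deriv_add_singularPartDeriv (hf : IsDomainHalf ν u u' u'' F a₁ a₂) (hν : 0 ≤ ν) :
    (fun x => u' x + singularPartDeriv ν a₁ a₂ x) =O[𝓟 (Ioc 0 1)]
      fun x => x ^ (-ν + 1/2 - 1) :=
  (hf.isBigO_deriv.trans (isBigO_rpow_of_le (by linarith))).add (isBigO_singularPartDeriv hν)

theorem isBigO (hf : IsDomainHalf ν u u' u'' F a₁ a₂) (hν : 0 ≤ ν) :
    (fun x => u x + F x) =O[𝓟 (Ioc 0 1)] fun x => x ^ (-ν + 1/2) :=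
  (hf.isBigO_add_singularPart hν).congr'
    (EqOn.eventuallyEq fun x hx => by rw [hf.eqOn_singularPart hx]) EventuallyEq.rfl

theorem continuousOn (hf : IsDomainHalf ν u u' u'' F a₁ a₂) :
    ContinuousOn (fun x => u x + F x) (Ioc 0 1) :=
  (hf.isH2On.primitive.continuousOn.mono Ioc_subset_Icc_self).add
    (ContinuousOn.congr (fun _ hx => (hasDerivAt_singularPart hx.1).continuousAt.continuousWithinAt)
      hf.eqOn_singularPart)

theorem memLp_two (hf : IsDomainHalf ν u u' u'' F a₁ a₂) (hν : ν ∈ Ico 0 1) :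
    MemLp (fun x => u x + F x) 2 (volume.restrict (Ioc 0 1)) :=
  (hf.isBigO hν.1).memLp_two (by linarith [hν.2])
    (hf.continuousOn.aestronglyMeasurable measurableSet_Ioc)

theorem intervalIntegrable_besselOp_mul (hν : ν ∈ Ico 0 1)
    (hf : IsDomainHalf ν u u' u'' F a₁ a₂) (hg : IsDomainHalf ν w w' w'' G d₁ d₂) :
    IntervalIntegrable (fun x => besselOp ν u u'' x * (w x + G x)) volume 0 1 := by
  have hu'' : MemLp u'' 2 (volume.restrict (Ioc 0 1)) := by
    have hm := hf.isH2On.primitive_deriv.intervalIntegrable.1.aestronglyMeasurable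
    exact (memLp_two_iff_integrable_sq hm).2 hf.isH2On.sq_intervalIntegrable.1
  have hcont : ContinuousOn (fun x => (ν ^ 2 - 1/4) / x ^ 2 * u x * (w x + G x)) (Ioc 0 1) :=
    ((continuousOn_const.div (continuous_pow 2).continuousOn fun x hx => pow_ne_zero 2 hx.1.ne').mul
      (hf.isH2On.primitive.continuousOn.mono Ioc_subset_Icc_self)).mul hg.continuousOn
  have hsing : IntegrableOn (fun x => (ν ^ 2 - 1/4) / x ^ 2 * u x * (w x + G x)) (Ioc 0 1) :=
    (((isBigO_const_div_sq _).mul_rpow hf.isBigO_regular).mul_rpow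
      (hg.isBigO hν.1)).integrableOn_Ioc (by linarith [hν.2])
      (hcont.aestronglyMeasurable measurableSet_Ioc)
  refine (intervalIntegrable_iff_integrableOn_Ioc_of_le zero_le_one).2 ?_
  have h : IntegrableOn (fun x => -(u'' x * (w x + G x))
      + (ν ^ 2 - 1/4) / x ^ 2 * u x * (w x + G x)) (Ioc 0 1) :=
    (hu''.integrable_mul (hg.memLp_two hν)).neg.add hsing
  refine h.congr_fun (fun x _ => ?_) measurableSet_Ioc
  simp only [besselOp]
  ring

theorem intervalIntegrable_mul_mul (hν : ν ∈ Ico 0 1)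
    (hf : IsDomainHalf ν u u' u'' F a₁ a₂) (hg : IsDomainHalf ν w w' w'' G d₁ d₂)
    (hq : ContinuousOn q (Icc 0 1)) :
    IntervalIntegrable (fun x => q x * (u x + F x) * (w x + G x)) volume 0 1 := by
  have hq' : q =O[𝓟 (Ioc 0 1)] fun x => x ^ (0 : ℝ) :=
    ((hq.isBigO_principal isCompact_Icc (by norm_num : ‖(1:ℝ)‖ ≠ 0)).mono
      (principal_mono.2 Ioc_subset_Icc_self)).congr' EventuallyEq.rfl
      (Eventually.of_forall fun x => (rpow_zero x).symm)
  have hcont : ContinuousOn (fun x => q x * (u x + F x) * (w x + G x)) (Ioc 0 1) :=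
    ((hq.mono Ioc_subset_Icc_self).mul hf.continuousOn).mul hg.continuousOn
  exact (intervalIntegrable_iff_integrableOn_Ioc_of_le zero_le_one).2
    (((hq'.mul_rpow (hf.isBigO hν.1)).mul_rpow (hg.isBigO hν.1)).integrableOn_Ioc
      (by linarith [hν.2]) (hcont.aestronglyMeasurable measurableSet_Ioc))

theorem intervalIntegrable_mul (hν : ν ∈ Ico 0 1)
    (hf : IsDomainHalf ν u u' u'' F a₁ a₂) (hg : IsDomainHalf ν w w' w'' G d₁ d₂)
    (hq : ContinuousOn q (Icc 0 1)) :
    IntervalIntegrable (fun x => (besselOp ν u u'' x + q x * (u x + F x)) * (w x + G x))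
      volume 0 1 := by
  simpa only [add_mul] using
    (hf.intervalIntegrable_besselOp_mul hν hg).add (hf.intervalIntegrable_mul_mul hν hg hq)

theorem isPrimitiveOn_add_singularPart (hf : IsDomainHalf ν u u' u'' F a₁ a₂)
    (hε : ε ∈ Ioc (0:ℝ) 1) :
    IsPrimitiveOn (fun x => u x + singularPart ν a₁ a₂ x)
        (fun x => u' x + singularPartDeriv ν a₁ a₂ x) ε 1 ∧
      IsPrimitiveOn (fun x => u' x + singularPartDeriv ν a₁ a₂ x)
        (fun x => u'' x + (ν ^ 2 - 1/4) / x ^ 2 * singularPart ν a₁ a₂ x) ε 1 :=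
  ⟨(hf.isH2On.primitive.mono hε.1.le hε.2 le_rfl).add (isPrimitiveOn_singularPart hε.1 hε.2),
    (hf.isH2On.primitive_deriv.mono hε.1.le hε.2 le_rfl).add
      (isPrimitiveOn_singularPartDeriv hε.1 hε.2)⟩

theorem integral_besselOp_sub_eq_neg_wronskian (hf : IsDomainHalf ν u u' u'' F a₁ a₂)
    (hg : IsDomainHalf ν w w' w'' G d₁ d₂) (hε : ε ∈ Ioc (0:ℝ) 1) :
    ∫ x in ε..1, (besselOp ν u u'' x * (w x + G x) - (u x + F x) * besselOp ν w w'' x) =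
      -wronskian (fun x => u x + singularPart ν a₁ a₂ x)
        (fun x => u' x + singularPartDeriv ν a₁ a₂ x) (fun x => w x + singularPart ν d₁ d₂ x)
        (fun x => w' x + singularPartDeriv ν d₁ d₂ x) ε := by
  obtain ⟨hf₁, hf₂⟩ := hf.isPrimitiveOn_add_singularPart hε
  obtain ⟨hg₁, hg₂⟩ := hg.isPrimitiveOn_add_singularPart hε
  have hW1 : wronskian (fun x => u x + singularPart ν a₁ a₂ x)
      (fun x => u' x + singularPartDeriv ν a₁ a₂ x) (fun x => w x + singularPart ν d₁ d₂ x)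
      (fun x => w' x + singularPartDeriv ν d₁ d₂ x) 1 = 0 := by
    have h1 : (1:ℝ) ∈ Ioc 0 1 := right_mem_Ioc.2 zero_lt_one
    simp only [wronskian, ← hf.eqOn_singularPart h1, ← hg.eqOn_singularPart h1, hf.apply_one,
      hg.apply_one, zero_mul, mul_zero, sub_zero]
  rw [← zero_sub, ← hW1, ← integral_mul_sub_eq_wronskian hε.2 hf₁ hf₂ hg₁ hg₂]
  refine intervalIntegral.integral_congr fun x hx => ?_
  rw [uIcc_of_le hε.2] at hx
  have hx' : x ∈ Ioc 0 1 := ⟨hε.1.trans_le hx.1, hx.2⟩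
  simp only [besselOp, hf.eqOn_singularPart hx', hg.eqOn_singularPart hx']
  ring

theorem tendsto_wronskian (hν : ν ∈ Ico 0 1) (hf : IsDomainHalf ν u u' u'' F a₁ a₂)
    (hg : IsDomainHalf ν w w' w'' G d₁ d₂) :
    Tendsto (wronskian (fun x => u x + singularPart ν a₁ a₂ x)
        (fun x => u' x + singularPartDeriv ν a₁ a₂ x) (fun x => w x + singularPart ν d₁ d₂ x)
        (fun x => w' x + singularPartDeriv ν d₁ d₂ x))
      (𝓝[>] 0) (𝓝 (-(2 * ν) * (a₁ * d₂ - a₂ * d₁))) := by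
  obtain ⟨hν0, hν1⟩ := hν
  -- all terms but the Wronskian of the singular parts are `O(x ^ (1 - ν))`
  have h₁ := (hf.isBigO_regular.mul_rpow
    (hg.isBigO_deriv_add_singularPartDeriv hν0)).tendsto_nhdsGT_zero (by linarith)
  have h₂ := (hf.isBigO_deriv.mul_rpow
    (hg.isBigO_add_singularPart hν0)).tendsto_nhdsGT_zero (by linarith)
  have h₃ := ((isBigO_singularPart (c₁ := a₁) (c₂ := a₂) hν0).mul_rpow
    hg.isBigO_deriv).tendsto_nhdsGT_zero (by linarith)
  have h₄ := ((isBigO_singularPartDeriv (c₁ := a₁) (c₂ := a₂) hν0).mul_rpow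
    hg.isBigO_regular).tendsto_nhdsGT_zero (by linarith)
  have hrem := ((h₁.sub h₂).add (h₃.sub h₄)).add_const (-(2 * ν) * (a₁ * d₂ - a₂ * d₁))
  simp only [sub_zero, add_zero, zero_add] at hrem
  refine hrem.congr' ?_
  filter_upwards [self_mem_nhdsWithin] with x (hx : 0 < x)
  rw [← wronskian_singularPart hx]
  simp only [wronskian]
  ring

theorem integral_besselOp_sub (hν : ν ∈ Ico 0 1) (hf : IsDomainHalf ν u u' u'' F a₁ a₂)
    (hg : IsDomainHalf ν w w' w'' G d₁ d₂) :
    ∫ x in (0:ℝ)..1, (besselOp ν u u'' x * (w x + G x) - (u x + F x) * besselOp ν w w'' x) =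
      2 * ν * (a₁ * d₂ - a₂ * d₁) := by
  have hD : IntervalIntegrable (fun x => besselOp ν u u'' x * (w x + G x)
      - (u x + F x) * besselOp ν w w'' x) volume 0 1 :=
    (hf.intervalIntegrable_besselOp_mul hν hg).sub
      (by simpa only [mul_comm] using hg.intervalIntegrable_besselOp_mul hν hf)
  refine intervalIntegral_eq_of_tendsto_nhdsGT zero_lt_one hD
    (fun ε hε => hf.integral_besselOp_sub_eq_neg_wronskian hg hε) ?_
  convert (hf.tendsto_wronskian hν hg).neg using 2
  ring

theorem integral_mul_eq (hν : ν ∈ Ico 0 1) (hf : IsDomainHalf ν u u' u'' F a₁ a₂)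
    (hg : IsDomainHalf ν w w' w'' G d₁ d₂) (hq : ContinuousOn q (Icc 0 1)) :
    ∫ x in (0:ℝ)..1, (besselOp ν u u'' x + q x * (u x + F x)) * (w x + G x) =
      (∫ x in (0:ℝ)..1, (u x + F x) * (besselOp ν w w'' x + q x * (w x + G x))) +
        2 * ν * (a₁ * d₂ - a₂ * d₁) := by
  have hR : IntervalIntegrable
      (fun x => (u x + F x) * (besselOp ν w w'' x + q x * (w x + G x))) volume 0 1 := by
    simpa only [mul_comm] using hg.intervalIntegrable_mul hν hf hq
  rw [← sub_eq_iff_eq_add',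
    ← intervalIntegral.integral_sub (hf.intervalIntegrable_mul hν hg hq) hR,
    ← hf.integral_besselOp_sub hν hg]
  exact intervalIntegral.integral_congr fun x _ => by ring

end IsDomainHalf

namespace IsH2On

variable {ν c₁ c₂ : ℝ} {u u' u'' F : ℝ → ℝ}

theorem isDomainHalf_right (h : IsH2On u u' u'' (-1) 1) (h0 : u 0 = 0) (h0' : u' 0 = 0)
    (hF : ∀ x ∈ Ioc (0:ℝ) 1, F x = c₁ * |x| ^ (ν + 1/2) + c₂ * |x| ^ (-ν + 1/2))
    (h1 : u 1 + F 1 = 0) : IsDomainHalf ν u u' u'' F c₁ c₂ :=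
  ⟨h.mono (by norm_num) zero_le_one le_rfl, h0, h0',
    fun x hx => by rw [hF x hx, abs_of_pos hx.1]; rfl, h1⟩

theorem isDomainHalf_left (h : IsH2On u u' u'' (-1) 1) (h0 : u 0 = 0) (h0' : u' 0 = 0)
    (hF : ∀ x ∈ Ico (-1:ℝ) 0, F x = c₁ * |x| ^ (ν + 1/2) + c₂ * |x| ^ (-ν + 1/2))
    (h1 : u (-1) + F (-1) = 0) :
    IsDomainHalf ν (fun x => u (-x)) (fun x => -u' (-x)) (fun x => u'' (-x)) (fun x => F (-x))
      c₁ c₂ := by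
  refine ⟨IsH2On.comp_neg ?_, by simpa using h0, by simpa using h0', fun x hx => ?_, h1⟩
  · rw [neg_zero]; exact h.mono le_rfl (by norm_num) zero_le_one
  · rw [hF (-x) ⟨by linarith [hx.2], by linarith [hx.1]⟩, abs_neg, abs_of_pos hx.1]; rfl

end IsH2On

theorem mul_det_add_det_eq_zero_of_transmission {ν a₁ a₂ b₁ b₂ d₁ d₂ e₁ e₂ : ℝ}
    (hfT1 : b₁ + b₂ + a₁ + a₂ = 0)
    (hfT2 : (ν + 1/2) * b₁ + (-ν + 1/2) * b₂ = (ν + 1/2) * a₁ + (-ν + 1/2) * a₂)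
    (hgT1 : e₁ + e₂ + d₁ + d₂ = 0)
    (hgT2 : (ν + 1/2) * e₁ + (-ν + 1/2) * e₂ = (ν + 1/2) * d₁ + (-ν + 1/2) * d₂) :
    ν * (a₁ * d₂ - a₂ * d₁ + (b₁ * e₂ - b₂ * e₁)) = 0 := by
  -- With `M = !![1, 1; ν + 1/2, -ν + 1/2]`, `det M = -2ν`, the conditions read
  -- `M b = diag(-1, 1) M a` and `M e = diag(-1, 1) M d`; expand `det (M b, M e)` both ways.
  linear_combination (-1/2 : ℝ) * (((ν + 1/2) * e₁ + (-ν + 1/2) * e₂) * hfT1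
    - (a₁ + a₂) * hgT2 - ((ν + 1/2) * b₁ + (-ν + 1/2) * b₂) * hgT1 + (d₁ + d₂) * hfT2)

theorem An_symmetric_general
    (ν : ℝ) (hν : ν ∈ Set.Ioo (0:ℝ) 1)
    (γ : ℝ) (hγ : 0 < γ) (n : ℕ)
    (fr fr' fr'' gr gr' gr'' fs gs : ℝ → ℝ)
    (a₁ a₂ b₁ b₂ d₁ d₂ e₁ e₂ : ℝ)
    -- regular part of f : H² on [-1,1] with f_r(0) = f_r'(0) = 0
    (hfr''int : IntervalIntegrable fr'' volume (-1) 1)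
    (hfr''sq : IntervalIntegrable (fun x => fr'' x ^ 2) volume (-1) 1)
    (hfrFTC : ∀ x ∈ Set.Icc (-1:ℝ) 1, fr x = fr (-1) + ∫ t in (-1:ℝ)..x, fr' t)
    (hfr'FTC : ∀ x ∈ Set.Icc (-1:ℝ) 1, fr' x = fr' (-1) + ∫ t in (-1:ℝ)..x, fr'' t)
    (hfr0 : fr 0 = 0) (hfr'0 : fr' 0 = 0)
    -- regular part of g
    (hgr''int : IntervalIntegrable gr'' volume (-1) 1)
    (hgr''sq : IntervalIntegrable (fun x => gr'' x ^ 2) volume (-1) 1)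
    (hgrFTC : ∀ x ∈ Set.Icc (-1:ℝ) 1, gr x = gr (-1) + ∫ t in (-1:ℝ)..x, gr' t)
    (hgr'FTC : ∀ x ∈ Set.Icc (-1:ℝ) 1, gr' x = gr' (-1) + ∫ t in (-1:ℝ)..x, gr'' t)
    (hgr0 : gr 0 = 0) (hgr'0 : gr' 0 = 0)
    -- singular parts
    (hfsP : ∀ x ∈ Set.Ioc (0:ℝ) 1,
        fs x = a₁ * |x| ^ (ν + 1/2) + a₂ * |x| ^ (-ν + 1/2))
    (hfsM : ∀ x ∈ Set.Ico (-1:ℝ) 0,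
        fs x = b₁ * |x| ^ (ν + 1/2) + b₂ * |x| ^ (-ν + 1/2))
    (hgsP : ∀ x ∈ Set.Ioc (0:ℝ) 1,
        gs x = d₁ * |x| ^ (ν + 1/2) + d₂ * |x| ^ (-ν + 1/2))
    (hgsM : ∀ x ∈ Set.Ico (-1:ℝ) 0,
        gs x = e₁ * |x| ^ (ν + 1/2) + e₂ * |x| ^ (-ν + 1/2))
    -- transmission conditions for f and for g
    (hfT1 : b₁ + b₂ + a₁ + a₂ = 0)
    (hfT2 : (ν + 1/2) * b₁ + (-ν + 1/2) * b₂ = (ν + 1/2) * a₁ + (-ν + 1/2) * a₂)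
    (hgT1 : e₁ + e₂ + d₁ + d₂ = 0)
    (hgT2 : (ν + 1/2) * e₁ + (-ν + 1/2) * e₂ = (ν + 1/2) * d₁ + (-ν + 1/2) * d₂)
    -- Dirichlet boundary conditions at ±1
    (hf1 : fr 1 + fs 1 = 0) (hfm1 : fr (-1) + fs (-1) = 0)
    (hg1 : gr 1 + gs 1 = 0) (hgm1 : gr (-1) + gs (-1) = 0) :
    (∫ x in (-1:ℝ)..1,
        (-(fr'' x) + ((ν ^ 2 - 1/4) / x ^ 2) * fr x
          + ((n : ℝ) * π) ^ 2 * |x| ^ (2*γ) * (fr x + fs x)) * (gr x + gs x))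
      = ∫ x in (-1:ℝ)..1,
          (fr x + fs x) *
            (-(gr'' x) + ((ν ^ 2 - 1/4) / x ^ 2) * gr x
              + ((n : ℝ) * π) ^ 2 * |x| ^ (2*γ) * (gr x + gs x)) := by
  have hν' : ν ∈ Ico 0 1 := Ioo_subset_Ico_self hν
  set q : ℝ → ℝ := fun x => ((n : ℝ) * π) ^ 2 * |x| ^ (2 * γ)
  have hq : Continuous q :=
    continuous_const.mul (continuous_abs.rpow_const fun _ => Or.inr (by linarith))
  have hqR : ContinuousOn q (Icc 0 1) := hq.continuousOn
  have hqL : ContinuousOn (fun x => q (-x)) (Icc 0 1) := (hq.comp continuous_neg).continuousOn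
  have hf := IsH2On.of_eq_add_integral (by norm_num) hfr''int hfr''sq hfrFTC hfr'FTC
  have hg := IsH2On.of_eq_add_integral (by norm_num) hgr''int hgr''sq hgrFTC hgr'FTC
  have fR := hf.isDomainHalf_right hfr0 hfr'0 hfsP hf1
  have fL := hf.isDomainHalf_left hfr0 hfr'0 hfsM hfm1
  have gR := hg.isDomainHalf_right hgr0 hgr'0 hgsP hg1
  have gL := hg.isDomainHalf_left hgr0 hgr'0 hgsM hgm1
  have hgreenR := fR.integral_mul_eq hν' gR hqR
  have hgreenL := fL.integral_mul_eq hν' gL hqL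
  have hlhsR := fR.intervalIntegrable_mul hν' gR hqR
  have hlhsL := fL.intervalIntegrable_mul hν' gL hqL
  have hrhsR := gR.intervalIntegrable_mul hν' fR hqR
  have hrhsL := gL.intervalIntegrable_mul hν' fL hqL
  simp only [besselOp_comp_neg] at hgreenL hlhsL hrhsL
  show ∫ x in (-1:ℝ)..1, (besselOp ν fr fr'' x + q x * (fr x + fs x)) * (gr x + gs x) =
    ∫ x in (-1:ℝ)..1, (fr x + fs x) * (besselOp ν gr gr'' x + q x * (gr x + gs x))
  rw [intervalIntegral_neg_eq_add_comp_neg hlhsR hlhsL, intervalIntegral_neg_eq_add_comp_neg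
    (by simpa only [mul_comm] using hrhsR) (by simpa only [mul_comm] using hrhsL), hgreenR, hgreenL]
  linear_combination 2 * mul_det_add_det_eq_zero_of_transmission hfT1 hfT2 hgT1 hgT2

/-- **Symmetry of the operator `A_n` on its domain `D(A)`.**
Let `ν ∈ (0,1)`, `c_ν := ν² - 1/4`, `γ > 0`, `n ∈ ℕ*`. Let `f = f_r + f_s` and
`g = g_r + g_s` belong to `D(A)`: the regular parts are `H²` on `[-1,1]`
(encoded via the fundamental theorem of calculus) with vanishing Cauchy data
at `0`; the singular parts are combinations of `|x|^(ν+1/2)`, `|x|^(-ν+1/2)` on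
each side of `0` with coefficients satisfying the transmission conditions; and
`f(±1) = g(±1) = 0`. With `A_n h := -h_r'' + (c_ν/x²) h_r + (nπ)² |x|^(2γ) h`,
we have `∫₋₁¹ (A_n f) g = ∫₋₁¹ f (A_n g)`. -/
theorem An_symmetric
    (ν : ℝ) (hν : ν ∈ Set.Ioo (0:ℝ) 1)
    (γ : ℝ) (hγ : 0 < γ) (n : ℕ) (hn : 0 < n)
    (fr fr' fr'' gr gr' gr'' fs gs : ℝ → ℝ)
    (a₁ a₂ b₁ b₂ d₁ d₂ e₁ e₂ : ℝ)
    -- regular part of f : H² on [-1,1] with f_r(0) = f_r'(0) = 0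
    (hfr''int : IntervalIntegrable fr'' volume (-1) 1)
    (hfr''sq : IntervalIntegrable (fun x => fr'' x ^ 2) volume (-1) 1)
    (hfrFTC : ∀ x ∈ Set.Icc (-1:ℝ) 1, fr x = fr (-1) + ∫ t in (-1:ℝ)..x, fr' t)
    (hfr'FTC : ∀ x ∈ Set.Icc (-1:ℝ) 1, fr' x = fr' (-1) + ∫ t in (-1:ℝ)..x, fr'' t)
    (hfr0 : fr 0 = 0) (hfr'0 : fr' 0 = 0)
    -- regular part of g
    (hgr''int : IntervalIntegrable gr'' volume (-1) 1)
    (hgr''sq : IntervalIntegrable (fun x => gr'' x ^ 2) volume (-1) 1)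
    (hgrFTC : ∀ x ∈ Set.Icc (-1:ℝ) 1, gr x = gr (-1) + ∫ t in (-1:ℝ)..x, gr' t)
    (hgr'FTC : ∀ x ∈ Set.Icc (-1:ℝ) 1, gr' x = gr' (-1) + ∫ t in (-1:ℝ)..x, gr'' t)
    (hgr0 : gr 0 = 0) (hgr'0 : gr' 0 = 0)
    -- singular parts
    (hfsP : ∀ x ∈ Set.Ioc (0:ℝ) 1,
        fs x = a₁ * |x| ^ (ν + 1/2) + a₂ * |x| ^ (-ν + 1/2))
    (hfsM : ∀ x ∈ Set.Ico (-1:ℝ) 0,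
        fs x = b₁ * |x| ^ (ν + 1/2) + b₂ * |x| ^ (-ν + 1/2))
    (hgsP : ∀ x ∈ Set.Ioc (0:ℝ) 1,
        gs x = d₁ * |x| ^ (ν + 1/2) + d₂ * |x| ^ (-ν + 1/2))
    (hgsM : ∀ x ∈ Set.Ico (-1:ℝ) 0,
        gs x = e₁ * |x| ^ (ν + 1/2) + e₂ * |x| ^ (-ν + 1/2))
    -- transmission conditions for f and for g
    (hfT1 : b₁ + b₂ + a₁ + a₂ = 0)
    (hfT2 : (ν + 1/2) * b₁ + (-ν + 1/2) * b₂ = (ν + 1/2) * a₁ + (-ν + 1/2) * a₂)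
    (hgT1 : e₁ + e₂ + d₁ + d₂ = 0)
    (hgT2 : (ν + 1/2) * e₁ + (-ν + 1/2) * e₂ = (ν + 1/2) * d₁ + (-ν + 1/2) * d₂)
    -- Dirichlet boundary conditions at ±1
    (hf1 : fr 1 + fs 1 = 0) (hfm1 : fr (-1) + fs (-1) = 0)
    (hg1 : gr 1 + gs 1 = 0) (hgm1 : gr (-1) + gs (-1) = 0) :
    (∫ x in (-1:ℝ)..1,
        (-(fr'' x) + ((ν ^ 2 - 1/4) / x ^ 2) * fr x
          + ((n : ℝ) * π) ^ 2 * |x| ^ (2*γ) * (fr x + fs x)) * (gr x + gs x))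
      = ∫ x in (-1:ℝ)..1,
          (fr x + fs x) *
            (-(gr'' x) + ((ν ^ 2 - 1/4) / x ^ 2) * gr x
              + ((n : ℝ) * π) ^ 2 * |x| ^ (2*γ) * (gr x + gs x)) :=
  An_symmetric_general ν hν γ hγ n fr fr' fr'' gr gr' gr'' fs gs a₁ a₂ b₁ b₂ d₁ d₂ e₁ e₂ hfr''int
    hfr''sq hfrFTC hfr'FTC hfr0 hfr'0 hgr''int hgr''sq hgrFTC hgr'FTC hgr0 hgr'0 hfsP hfsM hgsP hgsM
    hfT1 hfT2 hgT1 hgT2 hf1 hfm1 hg1 hgm1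
end

section
/- Let ν ∈ (0,1), c_ν := ν² - 1/4, and let b ∈ (0,1) satisfy: b arbitrary in (0,1) if ν ∈ (0, 1/2], and b = 2 - 2ν if ν ∈ (1/2, 1). Let z : [0,1] → ℝ be of class H² (z, z' absolutely continuous, z'' square-integrable) with z(0) = z(1) = 0 and z'(0) = 0. Then the integrals ∫₀¹ x^(b-2) z'(x)² dx and ∫₀¹ x^(b-4) z(x)² dx are finite and 2b(1-b) ∫₀¹ x^(b-2) z'(x)² dx + (b/2)((b-1)(b-2)(b-3) - 4c_ν) ∫₀¹ x^(b-4) z(x)² dx ≥ 0. -/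
/-!
Integrating `(x^(b-3) z²)' = (b-3) x^(b-4) z² + 2 x^(b-3) z z'` over `[0,1]` and completing a
square gives the weighted Hardy inequality `((3-b)/2)² ∫ x^(b-4) z² ≤ ∫ x^(b-2) z'²`. The boundary
term at `0` vanishes and all integrals converge because Cauchy–Schwarz and `z(0) = z'(0) = 0` give
`z'(x)² ≤ C x` and `z(x)² ≤ C x³`. Substituting the Hardy inequality leaves the coefficient
`(b/2)((1-b)(3-b) + 1 - 4ν²)` in front of `∫ x^(b-4) z²`, which is nonnegative for `ν ≤ 1/2` and
vanishes for `b = 2 - 2ν`.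
-/

open MeasureTheory Set Filter Topology

theorem sq_intervalIntegral_le {f : ℝ → ℝ} {a b : ℝ} (hab : a ≤ b)
    (hf : IntervalIntegrable f volume a b)
    (hf2 : IntervalIntegrable (fun t => f t ^ 2) volume a b) :
    (∫ t in a..b, f t) ^ 2 ≤ (b - a) * ∫ t in a..b, f t ^ 2 := by
  rcases hab.eq_or_lt with rfl | hlt
  · simp
  -- expand `0 ≤ ∫ (f - c)²` around the mean value `c` of `f`
  set c := (∫ t in a..b, f t) / (b - a)
  have hmean : ∫ t in a..b, f t = c * (b - a) := by
    simp only [c]; field_simp [(sub_pos.mpr hlt).ne']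
  have hvar : 0 ≤ ∫ t in a..b, (f t ^ 2 - 2 * c * f t + c ^ 2) :=
    intervalIntegral.integral_nonneg hab fun t _ => by nlinarith [sq_nonneg (f t - c)]
  rw [intervalIntegral.integral_add (hf2.sub (hf.const_mul _)) intervalIntegrable_const,
    intervalIntegral.integral_sub hf2 (hf.const_mul _), intervalIntegral.integral_const_mul,
    intervalIntegral.integral_const, hmean, smul_eq_mul] at hvar
  rw [hmean]
  nlinarith [sq_nonneg c]

section Primitive

variable {F f : ℝ → ℝ} {a b : ℝ}

theorem continuousOn_of_eq_add_primitive (hf : IntervalIntegrable f volume a b)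
    (hF : ∀ x ∈ Icc a b, F x = F a + ∫ t in a..x, f t) :
    ContinuousOn F (Icc a b) := by
  have hprim := intervalIntegral.continuousOn_primitive_interval
    ((intervalIntegrable_iff' (f := f) (μ := volume)).1 hf)
  exact ((continuousOn_const.add hprim).mono Icc_subset_uIcc).congr hF

theorem hasDerivAt_of_eq_add_primitive (hf : ContinuousOn f (Icc a b))
    (hF : ∀ x ∈ Icc a b, F x = F a + ∫ t in a..x, f t) {x : ℝ} (hx : x ∈ Ioo a b) :
    HasDerivAt F (f x) x := by
  have hnhds : Icc a b ∈ 𝓝 x := Icc_mem_nhds hx.1 hx.2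
  have hprim : HasDerivAt (fun u => ∫ t in a..u, f t) (f x) x :=
    intervalIntegral.integral_hasDerivAt_right
      ((hf.mono (Icc_subset_Icc_right hx.2.le)).intervalIntegrable_of_Icc hx.1.le)
      ⟨Icc a b, hnhds, hf.aestronglyMeasurable measurableSet_Icc⟩ (hf.continuousAt hnhds)
  refine (hprim.const_add (F a)).congr_of_eventuallyEq ?_
  filter_upwards [hnhds] with u hu using hF u hu

theorem sq_le_mul_integral_sq_of_eq_add_primitive (hf : IntervalIntegrable f volume 0 a)
    (hf2 : IntervalIntegrable (fun t => f t ^ 2) volume 0 a)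
    (hF : ∀ x ∈ Icc 0 a, F x = F 0 + ∫ t in 0..x, f t) (hF0 : F 0 = 0) {x : ℝ} (hx : x ∈ Icc 0 a) :
    F x ^ 2 ≤ (∫ t in 0..a, f t ^ 2) * x := by
  have hsub : uIcc 0 x ⊆ uIcc 0 a := by
    rw [uIcc_of_le hx.1, uIcc_of_le (hx.1.trans hx.2)]; exact Icc_subset_Icc_right hx.2
  rw [hF x hx, hF0, zero_add, mul_comm]
  calc (∫ t in 0..x, f t) ^ 2 ≤ (x - 0) * ∫ t in 0..x, f t ^ 2 :=
        sq_intervalIntegral_le hx.1 (hf.mono_set hsub) (hf2.mono_set hsub)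
    _ ≤ x * ∫ t in 0..a, f t ^ 2 := by
        rw [sub_zero]
        exact mul_le_mul_of_nonneg_left (intervalIntegral.integral_mono_interval le_rfl hx.1 hx.2
          (.of_forall fun t => sq_nonneg _) hf2) hx.1

theorem sq_le_mul_pow_three_of_eq_add_primitive {M : ℝ} (hf : ContinuousOn f (Icc 0 a))
    (hF : ∀ x ∈ Icc 0 a, F x = F 0 + ∫ t in 0..x, f t) (hF0 : F 0 = 0)
    (hbound : ∀ t ∈ Icc 0 a, f t ^ 2 ≤ M * t) {x : ℝ} (hx : x ∈ Icc 0 a) :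
    F x ^ 2 ≤ M / 2 * x ^ 3 := by
  have hfx : ContinuousOn f (uIcc 0 x) := by
    rw [uIcc_of_le hx.1]; exact hf.mono (Icc_subset_Icc_right hx.2)
  have hint : ∫ t in 0..x, f t ^ 2 ≤ ∫ t in 0..x, M * t :=
    intervalIntegral.integral_mono_on hx.1 (hfx.pow 2).intervalIntegrable
      (intervalIntegral.intervalIntegrable_id.const_mul M)
      fun t ht => hbound t ⟨ht.1, ht.2.trans hx.2⟩
  rw [intervalIntegral.integral_const_mul, integral_id] at hint
  rw [hF x hx, hF0, zero_add]
  calc (∫ t in 0..x, f t) ^ 2 ≤ (x - 0) * ∫ t in 0..x, f t ^ 2 :=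
        sq_intervalIntegral_le hx.1 hfx.intervalIntegrable (hfx.pow 2).intervalIntegrable
    _ ≤ x * (M * ((x ^ 2 - 0 ^ 2) / 2)) := by
        rw [sub_zero]; exact mul_le_mul_of_nonneg_left hint hx.1
    _ = M / 2 * x ^ 3 := by ring

end Primitive

section PowerWeights

variable {u : ℝ → ℝ} {a s C : ℝ} {n : ℕ}

theorem abs_rpow_mul_le {x v : ℝ} (hx : 0 < x) (hv : |v| ≤ C * x ^ n) :
    |x ^ s * v| ≤ C * x ^ (s + n) := by
  rw [abs_mul, abs_of_pos (Real.rpow_pos_of_pos hx s), Real.rpow_add_natCast hx.ne']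
  nlinarith [Real.rpow_pos_of_pos hx s]

theorem continuousOn_rpow_mul (hu : ContinuousOn u (Ioc 0 a)) :
    ContinuousOn (fun x => x ^ s * u x) (Ioc 0 a) :=
  (continuousOn_id.rpow_const fun _ hx => Or.inl hx.1.ne').mul hu

theorem intervalIntegrable_rpow_mul_of_abs_le (ha : 0 ≤ a) (hs : -1 < s + n)
    (hu : ContinuousOn u (Ioc 0 a)) (hbound : ∀ x ∈ Ioc 0 a, |u x| ≤ C * x ^ n) :
    IntervalIntegrable (fun x => x ^ s * u x) volume 0 a := by
  refine ((intervalIntegral.intervalIntegrable_rpow' hs).const_mul C).mono_fun ?_ ?_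
  · rw [uIoc_of_le ha]; exact (continuousOn_rpow_mul hu).aestronglyMeasurable measurableSet_Ioc
  · rw [uIoc_of_le ha]
    filter_upwards [ae_restrict_mem measurableSet_Ioc] with x hx
    exact (abs_rpow_mul_le hx.1 (hbound x hx)).trans (le_abs_self _)

theorem continuousOn_rpow_mul_of_abs_le (hs : 0 < s + n) (hu : ContinuousOn u (Ioc 0 a))
    (hu0 : u 0 = 0) (hbound : ∀ x ∈ Ioc 0 a, |u x| ≤ C * x ^ n) :
    ContinuousOn (fun x => x ^ s * u x) (Icc 0 a) := by
  intro x hx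
  rcases hx.1.eq_or_lt with rfl | hx0
  · have hlim : Tendsto (fun y : ℝ => C * y ^ (s + n)) (𝓝[Ioc 0 a] 0) (𝓝 0) := by
      have := ((Real.continuousAt_rpow_const 0 (s + n) (Or.inr hs.le)).tendsto.const_mul C)
      simpa [Real.zero_rpow hs.ne'] using this.mono_left nhdsWithin_le_nhds
    rw [← Ioc_insert_left hx.2, continuousWithinAt_insert_self, ContinuousWithinAt, hu0, mul_zero]
    exact squeeze_zero_norm'
      (eventually_nhdsWithin_of_forall fun y hy => abs_rpow_mul_le hy.1 (hbound y hy)) hlim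
  · exact (continuousOn_rpow_mul hu x ⟨hx0, hx.2⟩).mono_of_mem_nhdsWithin
      (mem_nhdsWithin.mpr ⟨Ioi 0, isOpen_Ioi, hx0, fun y hy => ⟨hy.1, hy.2.2⟩⟩)

end PowerWeights

theorem hasDerivAt_rpow_mul_sq {z z' : ℝ → ℝ} {x : ℝ} (hx : x ≠ 0) (hz : HasDerivAt z (z' x) x)
    (s : ℝ) :
    HasDerivAt (fun y => y ^ s * z y ^ 2) (s * (x ^ (s - 1) * z x ^ 2) + 2 * (x ^ s * (z x * z' x)))
      x :=
  ((Real.hasDerivAt_rpow_const (Or.inl hx)).mul (hz.pow 2)).congr_deriv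
    (by simp only [Pi.pow_apply]; push_cast; ring)

theorem weighted_hardy_pointwise {x : ℝ} (hx : 0 < x) (α u v : ℝ) :
    (1 - α) * (x ^ (α - 1) * (u * v))
      ≤ x ^ α * v ^ 2 + ((1 - α) / 2) ^ 2 * (x ^ (α - 2) * u ^ 2) := by
  rw [Real.rpow_sub_one hx.ne', Real.rpow_sub hx, Real.rpow_two, ← sub_nonneg]
  have hsq : x ^ α * v ^ 2 + ((1 - α) / 2) ^ 2 * (x ^ α / x ^ 2 * u ^ 2)
      - (1 - α) * (x ^ α / x * (u * v)) = x ^ α * (v - (1 - α) / 2 * (u / x)) ^ 2 := by ring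
  rw [hsq]
  exact mul_nonneg (Real.rpow_nonneg hx.le α) (sq_nonneg _)

theorem weighted_hardy {α : ℝ} {z z' : ℝ → ℝ} (hz : ∀ x ∈ Ioo 0 1, HasDerivAt z (z' x) x)
    (hg : ContinuousOn (fun x => x ^ (α - 1) * z x ^ 2) (Icc 0 1)) (hz0 : z 0 = 0) (hz1 : z 1 = 0)
    (hi : IntervalIntegrable (fun x => x ^ α * z' x ^ 2) volume 0 1)
    (hi' : IntervalIntegrable (fun x => x ^ (α - 2) * z x ^ 2) volume 0 1)
    (hi'' : IntervalIntegrable (fun x => x ^ (α - 1) * (z x * z' x)) volume 0 1) :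
    ((1 - α) / 2) ^ 2 * ∫ x in 0..1, x ^ (α - 2) * z x ^ 2 ≤ ∫ x in 0..1, x ^ α * z' x ^ 2 := by
  -- integration by parts; both boundary terms of `x ^ (α - 1) * z x ^ 2` vanish
  have hibp : (α - 1) * (∫ x in 0..1, x ^ (α - 2) * z x ^ 2)
      + 2 * ∫ x in 0..1, x ^ (α - 1) * (z x * z' x) = 0 := by
    rw [← intervalIntegral.integral_const_mul, ← intervalIntegral.integral_const_mul,
      ← intervalIntegral.integral_add (hi'.const_mul _) (hi''.const_mul _),
      intervalIntegral.integral_eq_sub_of_hasDerivAt_of_le zero_le_one hg _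
        ((hi'.const_mul _).add (hi''.const_mul _))]
    · simp [hz0, hz1]
    · intro x hx
      have h := hasDerivAt_rpow_mul_sq hx.1.ne' (hz x hx) (α - 1)
      rwa [show α - 1 - 1 = α - 2 by ring] at h
  have hcross : (1 - α) * ∫ x in 0..1, x ^ (α - 1) * (z x * z' x)
      ≤ (∫ x in 0..1, x ^ α * z' x ^ 2)
        + ((1 - α) / 2) ^ 2 * ∫ x in 0..1, x ^ (α - 2) * z x ^ 2 := by
    rw [← intervalIntegral.integral_const_mul, ← intervalIntegral.integral_const_mul,
      ← intervalIntegral.integral_add hi (hi'.const_mul _)]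
    exact intervalIntegral.integral_mono_on_of_le_Ioo zero_le_one (hi''.const_mul _)
      (hi.add (hi'.const_mul _)) fun x hx => weighted_hardy_pointwise hx.1 α (z x) (z' x)
  have hK : ∫ x in 0..1, x ^ (α - 1) * (z x * z' x)
      = (1 - α) / 2 * ∫ x in 0..1, x ^ (α - 2) * z x ^ 2 := by linarith
  rw [hK] at hcross
  linarith

theorem exists_pow_bounds_of_eq_add_primitive {z z' z'' : ℝ → ℝ}
    (hz''int : IntervalIntegrable z'' volume 0 1)
    (hz''sq : IntervalIntegrable (fun x => z'' x ^ 2) volume 0 1)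
    (hzFTC : ∀ x ∈ Icc (0:ℝ) 1, z x = z 0 + ∫ t in (0:ℝ)..x, z' t)
    (hz'FTC : ∀ x ∈ Icc (0:ℝ) 1, z' x = z' 0 + ∫ t in (0:ℝ)..x, z'' t)
    (hz0 : z 0 = 0) (hz'0 : z' 0 = 0) :
    ∃ M, (∀ x ∈ Ioc (0:ℝ) 1, |z' x ^ 2| ≤ M * x ^ 1) ∧ (∀ x ∈ Ioc (0:ℝ) 1, |z x ^ 2| ≤ M * x ^ 3)
      ∧ ∀ x ∈ Ioc (0:ℝ) 1, |z x * z' x| ≤ M * x ^ 2 := by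
  have hz'c := continuousOn_of_eq_add_primitive hz''int hz'FTC
  set M := ∫ t in (0:ℝ)..1, z'' t ^ 2
  have hM : 0 ≤ M := intervalIntegral.integral_nonneg zero_le_one fun t _ => sq_nonneg _
  have hz'M : ∀ x ∈ Icc (0:ℝ) 1, z' x ^ 2 ≤ M * x :=
    fun x => sq_le_mul_integral_sq_of_eq_add_primitive hz''int hz''sq hz'FTC hz'0
  have hzM : ∀ x ∈ Icc (0:ℝ) 1, z x ^ 2 ≤ M / 2 * x ^ 3 :=
    fun x => sq_le_mul_pow_three_of_eq_add_primitive hz'c hzFTC hz0 hz'M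
  have hz'sq : ∀ x ∈ Ioc (0:ℝ) 1, |z' x ^ 2| ≤ M * x ^ 1 := fun x hx => by
    rw [abs_sq, pow_one]; exact hz'M x (Ioc_subset_Icc_self hx)
  have hzsq : ∀ x ∈ Ioc (0:ℝ) 1, |z x ^ 2| ≤ M * x ^ 3 := fun x hx => by
    rw [abs_sq]; nlinarith [hzM x (Ioc_subset_Icc_self hx), pow_pos hx.1 3]
  refine ⟨M, hz'sq, hzsq, fun x hx => abs_le_of_sq_le_sq ?_ (mul_nonneg hM (pow_nonneg hx.1.le 2))⟩
  have h3 := hzsq x hx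
  have h1 := hz'sq x hx
  rw [abs_sq] at h3 h1
  calc (z x * z' x) ^ 2 = z x ^ 2 * z' x ^ 2 := by ring
    _ ≤ (M * x ^ 3) * (M * x ^ 1) := mul_le_mul h3 h1 (sq_nonneg _) (mul_nonneg hM (pow_nonneg hx.1.le 3))
    _ = (M * x ^ 2) ^ 2 := by ring

theorem carleman_coefficient_nonneg {ν b : ℝ} (hν : 0 < ν) (hb : b ∈ Ioo (0 : ℝ) 1)
    (hbν : 1 / 2 < ν → b = 2 - 2 * ν) :
    0 ≤ b / 2 * ((1 - b) * (3 - b) + 1 - 4 * ν ^ 2) := by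
  obtain ⟨hb0, hb1⟩ := hb
  rcases le_or_gt ν (1 / 2) with hν' | hν'
  · have h1 : 0 ≤ 1 - 4 * ν ^ 2 := by nlinarith
    have h2 : 0 ≤ (1 - b) * (3 - b) := by nlinarith
    exact mul_nonneg (by linarith) (by linarith)
  · exact le_of_eq (by rw [hbν hν']; ring)

theorem carleman_combination_nonneg {ν b I J : ℝ} (hν : 0 < ν) (hb : b ∈ Ioo (0 : ℝ) 1)
    (hbν : 1 / 2 < ν → b = 2 - 2 * ν) (hJ : 0 ≤ J) (hIJ : ((3 - b) / 2) ^ 2 * J ≤ I) :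
    0 ≤ 2 * b * (1 - b) * I + (b / 2) * ((b - 1) * (b - 2) * (b - 3) - 4 * (ν ^ 2 - 1 / 4)) * J := by
  have hb' : 0 ≤ 2 * b * (1 - b) := by nlinarith [hb.1, hb.2]
  calc 0 ≤ b / 2 * ((1 - b) * (3 - b) + 1 - 4 * ν ^ 2) * J :=
        mul_nonneg (carleman_coefficient_nonneg hν hb hbν) hJ
    _ = 2 * b * (1 - b) * (((3 - b) / 2) ^ 2 * J)
        + (b / 2) * ((b - 1) * (b - 2) * (b - 3) - 4 * (ν ^ 2 - 1 / 4)) * J := by ring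
    _ ≤ _ := add_le_add_left (mul_le_mul_of_nonneg_left hIJ hb') _

/-- **Positivity of the singular-potential term in the Carleman estimate.**
Let `ν ∈ (0,1)`, `c_ν := ν² - 1/4`, and `b ∈ (0,1)` with `b = 2 - 2ν` whenever
`ν ∈ (1/2,1)`. If `z ∈ H²(0,1)` (i.e. `z`, `z'` absolutely continuous on `[0,1]`
and `z''` square-integrable, encoded via the fundamental theorem of calculus)
with `z 0 = z 1 = 0` and `z' 0 = 0`, then `∫₀¹ x^(b-2) z'(x)² dx` and
`∫₀¹ x^(b-4) z(x)² dx` are finite and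
`2b(1-b) ∫₀¹ x^(b-2) z'² + (b/2)((b-1)(b-2)(b-3) - 4c_ν) ∫₀¹ x^(b-4) z² ≥ 0`. -/
theorem carleman_singular_term_positivity
    (ν : ℝ) (hν : ν ∈ Set.Ioo (0:ℝ) 1)
    (b : ℝ) (hb : b ∈ Set.Ioo (0:ℝ) 1) (hbν : 1/2 < ν → b = 2 - 2*ν)
    (z z' z'' : ℝ → ℝ)
    (hz''int : IntervalIntegrable z'' volume 0 1)
    (hz''sq : IntervalIntegrable (fun x => z'' x ^ 2) volume 0 1)
    (hzFTC : ∀ x ∈ Set.Icc (0:ℝ) 1, z x = z 0 + ∫ t in (0:ℝ)..x, z' t)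
    (hz'FTC : ∀ x ∈ Set.Icc (0:ℝ) 1, z' x = z' 0 + ∫ t in (0:ℝ)..x, z'' t)
    (hz0 : z 0 = 0) (hz1 : z 1 = 0) (hz'0 : z' 0 = 0) :
    IntervalIntegrable (fun x => x ^ (b - 2) * z' x ^ 2) volume 0 1 ∧
    IntervalIntegrable (fun x => x ^ (b - 4) * z x ^ 2) volume 0 1 ∧
    0 ≤ 2*b*(1 - b) * (∫ x in (0:ℝ)..1, x ^ (b - 2) * z' x ^ 2)
        + (b/2) * ((b - 1)*(b - 2)*(b - 3) - 4*(ν ^ 2 - 1/4))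
            * (∫ x in (0:ℝ)..1, x ^ (b - 4) * z x ^ 2) := by
  have hz'c := continuousOn_of_eq_add_primitive hz''int hz'FTC
  have hzc := continuousOn_of_eq_add_primitive (hz'c.intervalIntegrable_of_Icc zero_le_one) hzFTC
  obtain ⟨M, hz'M, hzM, hzz'M⟩ :=
    exists_pow_bounds_of_eq_add_primitive hz''int hz''sq hzFTC hz'FTC hz0 hz'0
  have hi1 := intervalIntegrable_rpow_mul_of_abs_le (s := b - 2) zero_le_one
    (by push_cast; linarith [hb.1]) ((hz'c.pow 2).mono Ioc_subset_Icc_self) hz'M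
  have hi2 := intervalIntegrable_rpow_mul_of_abs_le (s := b - 4) zero_le_one
    (by push_cast; linarith [hb.1]) ((hzc.pow 2).mono Ioc_subset_Icc_self) hzM
  have hi3 := intervalIntegrable_rpow_mul_of_abs_le (s := b - 3) zero_le_one
    (by push_cast; linarith [hb.1]) ((hzc.mul hz'c).mono Ioc_subset_Icc_self) hzz'M
  have hg := continuousOn_rpow_mul_of_abs_le (s := b - 3) (by push_cast; linarith [hb.1])
    ((hzc.pow 2).mono Ioc_subset_Icc_self) (by simp [hz0]) hzM
  have hardy := weighted_hardy (α := b - 2) (fun x => hasDerivAt_of_eq_add_primitive hz'c hzFTC)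
    (by rwa [show b - 2 - 1 = b - 3 by ring]) hz0 hz1 hi1
    (by rwa [show b - 2 - 2 = b - 4 by ring]) (by rwa [show b - 2 - 1 = b - 3 by ring])
  rw [show b - 2 - 2 = b - 4 by ring, show 1 - (b - 2) = 3 - b by ring] at hardy
  refine ⟨hi1, hi2, carleman_combination_nonneg hν.1 hb hbν ?_ hardy⟩
  exact intervalIntegral.integral_nonneg zero_le_one fun x hx =>
    mul_nonneg (Real.rpow_nonneg hx.1 _) (sq_nonneg _)
end
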